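/- arXiv:2503.05960 — 9 statements merged into one kernel-verified Lean document; each statement's English description precedes it below -/
import Mathlib

section
/- For the family of six-vertex R-matrices R^cf_{q₁,q₂}(z₁,z₂,w) with entries a₁ = a₂ = q₁z₁ − q₂z₂, b₁ = q₁(z₁ − z₂), b₂ = q₂(z₁ − z₂), c₁ = z₁w(q₁ − q₂), c₂ = z₂w⁻¹(q₁ − q₂), the Yang-Baxter commutator vanishes: ⟦R^cf(z₁,z₂,w₁), R^cf(z₁z₃,z₂z₄,w₁w₂), R^cf(z₃,z₄,w₂)⟧ = 0, for all nonzero complex parameters q₁,q₂,z₁,z₂,z₃,z₄,w₁,w₂. -/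
open scoped Matrix

noncomputable section

/-- The six-vertex matrix with weights `a₁ a₂ b₁ b₂ c₁ c₂`, as an endomorphism
of `ℂ² ⊗ ℂ²` (indexed by `Fin 2 × Fin 2`, basis order `e₁⊗e₁, e₁⊗e₂, e₂⊗e₁, e₂⊗e₂`). -/
def sixV (a₁ a₂ b₁ b₂ c₁ c₂ : ℂ) : Matrix (Fin 2 × Fin 2) (Fin 2 × Fin 2) ℂ :=
  Matrix.of fun p q =>
    if p = (0, 0) ∧ q = (0, 0) then a₁
    else if p = (1, 1) ∧ q = (1, 1) then a₂
    else if p = (0, 1) ∧ q = (0, 1) then c₁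
    else if p = (0, 1) ∧ q = (1, 0) then b₁
    else if p = (1, 0) ∧ q = (0, 1) then b₂
    else if p = (1, 0) ∧ q = (1, 0) then c₂
    else 0

/-- `u ⊗ I` acting on the first two factors of `ℂ² ⊗ ℂ² ⊗ ℂ²`. -/
def t12 (u : Matrix (Fin 2 × Fin 2) (Fin 2 × Fin 2) ℂ) :
    Matrix (Fin 2 × Fin 2 × Fin 2) (Fin 2 × Fin 2 × Fin 2) ℂ :=
  Matrix.of fun p q => u (p.1, p.2.1) (q.1, q.2.1) * (if p.2.2 = q.2.2 then 1 else 0)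

/-- `I ⊗ u` acting on the last two factors of `ℂ² ⊗ ℂ² ⊗ ℂ²`. -/
def t23 (u : Matrix (Fin 2 × Fin 2) (Fin 2 × Fin 2) ℂ) :
    Matrix (Fin 2 × Fin 2 × Fin 2) (Fin 2 × Fin 2 × Fin 2) ℂ :=
  Matrix.of fun p q => (if p.1 = q.1 then 1 else 0) * u (p.2.1, p.2.2) (q.2.1, q.2.2)

/-- The Yang-Baxter commutator `⟦r, s, t⟧ = (r⊗I)(I⊗s)(t⊗I) − (I⊗t)(s⊗I)(I⊗r)`. -/
def ybComm (r s t : Matrix (Fin 2 × Fin 2) (Fin 2 × Fin 2) ℂ) :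
    Matrix (Fin 2 × Fin 2 × Fin 2) (Fin 2 × Fin 2 × Fin 2) ℂ :=
  t12 r * t23 s * t12 t - t23 t * t12 s * t23 r

/-- The R-matrix `R^cf`. -/
noncomputable def Rcf (q₁ q₂ z₁ z₂ w : ℂ) : Matrix (Fin 2 × Fin 2) (Fin 2 × Fin 2) ℂ :=
  sixV (q₁ * z₁ - q₂ * z₂) (q₁ * z₁ - q₂ * z₂) (q₁ * (z₁ - z₂)) (q₂ * (z₁ - z₂))
    (z₁ * w * (q₁ - q₂)) (z₂ * w⁻¹ * (q₁ - q₂))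

namespace RcfAux

def ch3 (p : Fin 2 × Fin 2 × Fin 2) : ℕ := p.1.val + p.2.1.val + p.2.2.val

def Pres (M : Matrix (Fin 2 × Fin 2 × Fin 2) (Fin 2 × Fin 2 × Fin 2) ℂ) : Prop :=
  ∀ p q, ch3 p ≠ ch3 q → M p q = 0

lemma sixV_charge (a₁ a₂ b₁ b₂ c₁ c₂ : ℂ) (p q : Fin 2 × Fin 2)
    (h : p.1.val + p.2.val ≠ q.1.val + q.2.val) : sixV a₁ a₂ b₁ b₂ c₁ c₂ p q = 0 := by
  rcases p with ⟨i, j⟩; rcases q with ⟨l, m⟩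
  fin_cases i <;> fin_cases j <;> fin_cases l <;> fin_cases m <;>
    first | rfl | exact absurd rfl h

lemma t12_charge (u : Matrix (Fin 2 × Fin 2) (Fin 2 × Fin 2) ℂ)
    (hu : ∀ p q, p.1.val + p.2.val ≠ q.1.val + q.2.val → u p q = 0) : Pres (t12 u) := by
  rintro ⟨i, j, k⟩ ⟨l, m, n⟩ h
  by_cases hk : k = n
  · subst hk
    have h' : i.val + j.val + k.val ≠ l.val + m.val + k.val := h
    have hu' : i.val + j.val ≠ l.val + m.val → u (i, j) (l, m) = 0 := hu (i, j) (l, m)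
    have h0 : u (i, j) (l, m) = 0 := hu' (by omega)
    simp [t12, h0]
  · simp [t12, hk]

lemma t23_charge (u : Matrix (Fin 2 × Fin 2) (Fin 2 × Fin 2) ℂ)
    (hu : ∀ p q, p.1.val + p.2.val ≠ q.1.val + q.2.val → u p q = 0) : Pres (t23 u) := by
  rintro ⟨i, j, k⟩ ⟨l, m, n⟩ h
  by_cases hk : i = l
  · subst hk
    have h' : i.val + j.val + k.val ≠ i.val + m.val + n.val := h
    have hu' : j.val + k.val ≠ m.val + n.val → u (j, k) (m, n) = 0 := hu (j, k) (m, n)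
    have h0 : u (j, k) (m, n) = 0 := hu' (by omega)
    simp [t23, h0]
  · simp [t23, hk]

lemma mul_charge {A B : Matrix (Fin 2 × Fin 2 × Fin 2) (Fin 2 × Fin 2 × Fin 2) ℂ}
    (hA : Pres A) (hB : Pres B) : Pres (A * B) := by
  intro p q h
  rw [Matrix.mul_apply]
  apply Finset.sum_eq_zero
  intro k _
  by_cases hk : ch3 p = ch3 k
  · rw [hB k q (by omega), mul_zero]
  · rw [hA p k hk, zero_mul]

lemma Rcf_charge (q₁ q₂ z₁ z₂ w : ℂ) (p q : Fin 2 × Fin 2)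
    (h : p.1.val + p.2.val ≠ q.1.val + q.2.val) : Rcf q₁ q₂ z₁ z₂ w p q = 0 :=
  sixV_charge _ _ _ _ _ _ p q h

lemma ybComm_charge (r s t : Matrix (Fin 2 × Fin 2) (Fin 2 × Fin 2) ℂ)
    (hr : ∀ p q, p.1.val + p.2.val ≠ q.1.val + q.2.val → r p q = 0)
    (hs : ∀ p q, p.1.val + p.2.val ≠ q.1.val + q.2.val → s p q = 0)
    (ht : ∀ p q, p.1.val + p.2.val ≠ q.1.val + q.2.val → t p q = 0) :
    Pres (ybComm r s t) := by
  intro p q h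
  simp only [ybComm, Matrix.sub_apply]
  rw [mul_charge (mul_charge (t12_charge r hr) (t23_charge s hs)) (t12_charge t ht) p q h,
    mul_charge (mul_charge (t23_charge t ht) (t12_charge s hs)) (t23_charge r hr) p q h,
    sub_zero]

end RcfAux

set_option maxHeartbeats 3200000 in
theorem Rcf_yang_baxter (q₁ q₂ z₁ z₂ z₃ z₄ w₁ w₂ : ℂ)
    (hq₁ : q₁ ≠ 0) (hq₂ : q₂ ≠ 0) (hz₁ : z₁ ≠ 0) (hz₂ : z₂ ≠ 0)
    (hz₃ : z₃ ≠ 0) (hz₄ : z₄ ≠ 0) (hw₁ : w₁ ≠ 0) (hw₂ : w₂ ≠ 0) :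
    ybComm (Rcf q₁ q₂ z₁ z₂ w₁) (Rcf q₁ q₂ (z₁ * z₃) (z₂ * z₄) (w₁ * w₂))
      (Rcf q₁ q₂ z₃ z₄ w₂) = 0 := by
  have hch : RcfAux.Pres (ybComm (Rcf q₁ q₂ z₁ z₂ w₁)
      (Rcf q₁ q₂ (z₁ * z₃) (z₂ * z₄) (w₁ * w₂)) (Rcf q₁ q₂ z₃ z₄ w₂)) :=
    RcfAux.ybComm_charge _ _ _ (RcfAux.Rcf_charge _ _ _ _ _) (RcfAux.Rcf_charge _ _ _ _ _)
      (RcfAux.Rcf_charge _ _ _ _ _)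
  ext ⟨i, j, k⟩ ⟨l, m, n⟩
  show ybComm _ _ _ (i, j, k) (l, m, n) = 0
  fin_cases i <;> fin_cases j <;> fin_cases k <;> fin_cases l <;> fin_cases m <;> fin_cases n <;>
    first
      | exact hch _ _ (by decide)
      | (simp only [ybComm, Matrix.sub_apply, Matrix.mul_apply,
          Fintype.sum_prod_type, Fin.sum_univ_two, t12, t23, Rcf, sixV, Matrix.of_apply,
          Prod.mk.injEq, Fin.isValue, Fin.zero_eta, Fin.mk_one,
          zero_ne_one, one_ne_zero, and_true, and_false, true_and,
          false_and, and_self, reduceIte, mul_zero, zero_mul, mul_one, one_mul, add_zero,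
          zero_add, if_true, if_false]
         first
           | ring1
           | (field_simp; ring1)
           | (ring_nf
              simp only [mul_inv_cancel_right₀ hw₁, mul_inv_cancel_right₀ hw₂,
                mul_inv_cancel_right₀ (mul_ne_zero hw₁ hw₂)]
              ring1))
end
end

section
/- Let u, v be six-vertex matrices with a₁(u), a₂(u), a₁(v), a₂(v) all nonzero. A six-vertex matrix w with Yang-Baxter commutator ⟦u,w,v⟧ = 0 exists if and only if N(u)b₁(v)/a₁(u) = N(v)b₁(u)/a₂(v) and N(u)b₂(v)/a₂(u) = N(v)b₂(u)/a₁(v). In that case the normalized solution is given by c₁(w) = c₁(u)c₁(v), c₂(w) = c₂(u)c₂(v), a₁(w) = a₁(u)a₁(v) − b₂(u)b₁(v), a₂(w) = a₂(u)a₂(v) − b₁(u)b₂(v), b₁(w) = a₁(u*)b₁(v) + b₁(u)a₁(v), b₂(w) = a₂(u*)b₂(v) + b₂(u)a₂(v), and any other solution is a scalar multiple of w. -/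
open scoped Matrix

noncomputable section

set_option maxHeartbeats 0 in
lemma yb_zero_of_eqs (a₁u a₂u b₁u b₂u c₁u c₂u a₁v a₂v b₁v b₂v c₁v c₂v a₁w a₂w b₁w b₂w c₁w c₂w : ℂ)
    (h0 : a₁u*a₁v*c₁w - a₁w*c₁u*c₁v - b₁v*b₂u*c₁w = 0)
    (h1 : a₁u*b₁w*c₁v - a₁w*b₁u*c₁v - b₁v*c₁w*c₂u = 0)
    (h2 : a₁v*b₂w*c₁u - a₁w*b₂v*c₁u - b₂u*c₁w*c₂v = 0)
    (h3 : c₁u*c₁v*c₂w - c₁w*c₂u*c₂v = 0)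
    (h4 : -(a₁u*b₁w*c₂v) + a₁w*b₁u*c₂v + b₁v*c₁u*c₂w = 0)
    (h5 : -(a₂u*a₂v*c₁w) + a₂w*c₁u*c₁v + b₁u*b₂v*c₁w = 0)
    (h6 : -(a₂v*b₁w*c₁u) + a₂w*b₁v*c₁u + b₁u*c₁w*c₂v = 0)
    (h7 : -(a₁v*b₂w*c₂u) + a₁w*b₂v*c₂u + b₂u*c₁v*c₂w = 0)
    (h8 : -(a₁u*a₁v*c₂w) + a₁w*c₂u*c₂v + b₁v*b₂u*c₂w = 0)
    (h9 : -(a₂u*b₂w*c₁v) + a₂w*b₂u*c₁v + b₂v*c₁w*c₂u = 0)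
    (h10 : a₂v*b₁w*c₂u - a₂w*b₁v*c₂u - b₁u*c₁v*c₂w = 0)
    (h11 : a₂u*b₂w*c₂v - a₂w*b₂u*c₂v - b₂v*c₁u*c₂w = 0)
    (h12 : a₂u*a₂v*c₂w - a₂w*c₂u*c₂v - b₁u*b₂v*c₂w = 0) :
    ybComm (sixV a₁u a₂u b₁u b₂u c₁u c₂u) (sixV a₁w a₂w b₁w b₂w c₁w c₂w)
      (sixV a₁v a₂v b₁v b₂v c₁v c₂v) = 0 := by
  ext ⟨i, j, k⟩ ⟨i', j', k'⟩
  fin_cases i <;> fin_cases j <;> fin_cases k <;> fin_cases i' <;> fin_cases j' <;> fin_cases k' <;>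
    simp [ybComm, t12, t23, sixV, Matrix.mul_apply, Fintype.sum_prod_type, Fin.sum_univ_two,
      Prod.ext_iff] <;>
    first
      | ring1
      | linear_combination h0 | linear_combination -h0
      | linear_combination h1 | linear_combination -h1
      | linear_combination h2 | linear_combination -h2
      | linear_combination h3 | linear_combination -h3
      | linear_combination h4 | linear_combination -h4
      | linear_combination h5 | linear_combination -h5
      | linear_combination h6 | linear_combination -h6
      | linear_combination h7 | linear_combination -h7
      | linear_combination h8 | linear_combination -h8
      | linear_combination h9 | linear_combination -h9
      | linear_combination h10 | linear_combination -h10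
      | linear_combination h11 | linear_combination -h11
      | linear_combination h12 | linear_combination -h12

set_option maxHeartbeats 1600000 in
lemma eqs_of_yb (a₁u a₂u b₁u b₂u c₁u c₂u a₁v a₂v b₁v b₂v c₁v c₂v a₁w a₂w b₁w b₂w c₁w c₂w : ℂ)
    (h : ybComm (sixV a₁u a₂u b₁u b₂u c₁u c₂u) (sixV a₁w a₂w b₁w b₂w c₁w c₂w)
      (sixV a₁v a₂v b₁v b₂v c₁v c₂v) = 0) :
    a₁u*a₁v*c₁w - a₁w*c₁u*c₁v - b₁v*b₂u*c₁w = 0 ∧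
    a₁u*b₁w*c₁v - a₁w*b₁u*c₁v - b₁v*c₁w*c₂u = 0 ∧
    a₁v*b₂w*c₁u - a₁w*b₂v*c₁u - b₂u*c₁w*c₂v = 0 ∧
    c₁u*c₁v*c₂w - c₁w*c₂u*c₂v = 0 ∧
    -(a₂u*a₂v*c₁w) + a₂w*c₁u*c₁v + b₁u*b₂v*c₁w = 0 ∧
    -(a₂v*b₁w*c₁u) + a₂w*b₁v*c₁u + b₁u*c₁w*c₂v = 0 ∧
    -(a₂u*b₂w*c₁v) + a₂w*b₂u*c₁v + b₂v*c₁w*c₂u = 0 := by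
  have hp : ∀ p q : Fin 2 × Fin 2 × Fin 2,
      ybComm (sixV a₁u a₂u b₁u b₂u c₁u c₂u) (sixV a₁w a₂w b₁w b₂w c₁w c₂w)
        (sixV a₁v a₂v b₁v b₂v c₁v c₂v) p q = 0 := fun p q => by rw [h]; rfl
  refine ⟨?_, ?_, ?_, ?_, ?_, ?_, ?_⟩
  · have := hp (0,(0,1)) (0,(0,1))
    simp [ybComm, t12, t23, sixV, Matrix.mul_apply, Fintype.sum_prod_type, Fin.sum_univ_two,
      Prod.ext_iff] at this
    linear_combination this
  · have := hp (0,(0,1)) (0,(1,0))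
    simp [ybComm, t12, t23, sixV, Matrix.mul_apply, Fintype.sum_prod_type, Fin.sum_univ_two,
      Prod.ext_iff] at this
    linear_combination this
  · have := hp (0,(1,0)) (0,(0,1))
    simp [ybComm, t12, t23, sixV, Matrix.mul_apply, Fintype.sum_prod_type, Fin.sum_univ_two,
      Prod.ext_iff] at this
    linear_combination this
  · have := hp (0,(1,0)) (0,(1,0))
    simp [ybComm, t12, t23, sixV, Matrix.mul_apply, Fintype.sum_prod_type, Fin.sum_univ_two,
      Prod.ext_iff] at this
    linear_combination this
  · have := hp (0,(1,1)) (0,(1,1))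
    simp [ybComm, t12, t23, sixV, Matrix.mul_apply, Fintype.sum_prod_type, Fin.sum_univ_two,
      Prod.ext_iff] at this
    linear_combination this
  · have := hp (0,(1,1)) (1,(0,1))
    simp [ybComm, t12, t23, sixV, Matrix.mul_apply, Fintype.sum_prod_type, Fin.sum_univ_two,
      Prod.ext_iff] at this
    linear_combination this
  · have := hp (1,(0,1)) (0,(1,1))
    simp [ybComm, t12, t23, sixV, Matrix.mul_apply, Fintype.sum_prod_type, Fin.sum_univ_two,
      Prod.ext_iff] at this
    linear_combination this

lemma w0_works (a₁u a₂u b₁u b₂u c₁u c₂u a₁v a₂v b₁v b₂v c₁v c₂v : ℂ)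
    (ha₁u : a₁u ≠ 0) (ha₂u : a₂u ≠ 0)
    (hC1 : (a₁u * a₂u + b₁u * b₂u - c₁u * c₂u) * b₁v * a₂v =
      (a₁v * a₂v + b₁v * b₂v - c₁v * c₂v) * b₁u * a₁u)
    (hC2 : (a₁u * a₂u + b₁u * b₂u - c₁u * c₂u) * b₂v * a₁v =
      (a₁v * a₂v + b₁v * b₂v - c₁v * c₂v) * b₂u * a₂u) :
    ybComm (sixV a₁u a₂u b₁u b₂u c₁u c₂u)
      (sixV (a₁u * a₁v - b₂u * b₁v) (a₂u * a₂v - b₁u * b₂v)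
        (((c₁u * c₂u - b₁u * b₂u) / a₁u) * b₁v + b₁u * a₁v)
        (((c₁u * c₂u - b₁u * b₂u) / a₂u) * b₂v + b₂u * a₂v)
        (c₁u * c₁v) (c₂u * c₂v))
      (sixV a₁v a₂v b₁v b₂v c₁v c₂v) = 0 := by
  apply yb_zero_of_eqs
  · ring
  · field_simp; ring
  · field_simp; first | linear_combination c₁u * hC2 | linear_combination -(c₁u * hC2)
  · ring
  · field_simp; ring
  · ring
  · field_simp; first | linear_combination c₁u * hC1 | linear_combination -(c₁u * hC1)
  · field_simp; first | linear_combination c₂u * hC2 | linear_combination -(c₂u * hC2)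
  · ring
  · field_simp; ring
  · field_simp; first | linear_combination c₂u * hC1 | linear_combination -(c₂u * hC1)
  · field_simp; ring
  · ring

lemma smul_sixV (lam a₁ a₂ b₁ b₂ c₁ c₂ : ℂ) :
    lam • sixV a₁ a₂ b₁ b₂ c₁ c₂ = sixV (lam*a₁) (lam*a₂) (lam*b₁) (lam*b₂) (lam*c₁) (lam*c₂) := by
  ext p q
  simp only [Matrix.smul_apply, sixV, Matrix.of_apply, smul_eq_mul, mul_ite, mul_zero]


set_option maxHeartbeats 1600000 in
theorem sixV_yang_baxter_solution (a₁u a₂u b₁u b₂u c₁u c₂u a₁v a₂v b₁v b₂v c₁v c₂v : ℂ)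
    (hc₁u : c₁u ≠ 0) (hc₂u : c₂u ≠ 0) (hc₁v : c₁v ≠ 0) (hc₂v : c₂v ≠ 0)
    (ha₁u : a₁u ≠ 0) (ha₂u : a₂u ≠ 0) (ha₁v : a₁v ≠ 0) (ha₂v : a₂v ≠ 0) :
    ((∃ a₁w a₂w b₁w b₂w c₁w c₂w : ℂ, c₁w ≠ 0 ∧ c₂w ≠ 0 ∧
        ybComm (sixV a₁u a₂u b₁u b₂u c₁u c₂u) (sixV a₁w a₂w b₁w b₂w c₁w c₂w)
          (sixV a₁v a₂v b₁v b₂v c₁v c₂v) = 0) ↔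
      ((a₁u * a₂u + b₁u * b₂u - c₁u * c₂u) * b₁v / a₁u =
          (a₁v * a₂v + b₁v * b₂v - c₁v * c₂v) * b₁u / a₂v ∧
        (a₁u * a₂u + b₁u * b₂u - c₁u * c₂u) * b₂v / a₂u =
          (a₁v * a₂v + b₁v * b₂v - c₁v * c₂v) * b₂u / a₁v)) ∧
    (((a₁u * a₂u + b₁u * b₂u - c₁u * c₂u) * b₁v / a₁u =
          (a₁v * a₂v + b₁v * b₂v - c₁v * c₂v) * b₁u / a₂v ∧
        (a₁u * a₂u + b₁u * b₂u - c₁u * c₂u) * b₂v / a₂u =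
          (a₁v * a₂v + b₁v * b₂v - c₁v * c₂v) * b₂u / a₁v) →
      (ybComm (sixV a₁u a₂u b₁u b₂u c₁u c₂u)
          (sixV (a₁u * a₁v - b₂u * b₁v) (a₂u * a₂v - b₁u * b₂v)
            (((c₁u * c₂u - b₁u * b₂u) / a₁u) * b₁v + b₁u * a₁v)
            (((c₁u * c₂u - b₁u * b₂u) / a₂u) * b₂v + b₂u * a₂v)
            (c₁u * c₁v) (c₂u * c₂v))
          (sixV a₁v a₂v b₁v b₂v c₁v c₂v) = 0 ∧
        ∀ a₁w a₂w b₁w b₂w c₁w c₂w : ℂ, c₁w ≠ 0 → c₂w ≠ 0 →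
          ybComm (sixV a₁u a₂u b₁u b₂u c₁u c₂u) (sixV a₁w a₂w b₁w b₂w c₁w c₂w)
            (sixV a₁v a₂v b₁v b₂v c₁v c₂v) = 0 →
          ∃ lam : ℂ, sixV a₁w a₂w b₁w b₂w c₁w c₂w =
            lam • sixV (a₁u * a₁v - b₂u * b₁v) (a₂u * a₂v - b₁u * b₂v)
              (((c₁u * c₂u - b₁u * b₂u) / a₁u) * b₁v + b₁u * a₁v)
              (((c₁u * c₂u - b₁u * b₂u) / a₂u) * b₂v + b₂u * a₂v)
              (c₁u * c₁v) (c₂u * c₂v))) := by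
  have hw0 : ∀ _ : ((a₁u * a₂u + b₁u * b₂u - c₁u * c₂u) * b₁v / a₁u =
          (a₁v * a₂v + b₁v * b₂v - c₁v * c₂v) * b₁u / a₂v ∧
        (a₁u * a₂u + b₁u * b₂u - c₁u * c₂u) * b₂v / a₂u =
          (a₁v * a₂v + b₁v * b₂v - c₁v * c₂v) * b₂u / a₁v),
      ybComm (sixV a₁u a₂u b₁u b₂u c₁u c₂u)
          (sixV (a₁u * a₁v - b₂u * b₁v) (a₂u * a₂v - b₁u * b₂v)
            (((c₁u * c₂u - b₁u * b₂u) / a₁u) * b₁v + b₁u * a₁v)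
            (((c₁u * c₂u - b₁u * b₂u) / a₂u) * b₂v + b₂u * a₂v)
            (c₁u * c₁v) (c₂u * c₂v))
          (sixV a₁v a₂v b₁v b₂v c₁v c₂v) = 0 := by
    rintro ⟨hC1, hC2⟩
    rw [div_eq_div_iff ha₁u ha₂v] at hC1
    rw [div_eq_div_iff ha₂u ha₁v] at hC2
    exact w0_works a₁u a₂u b₁u b₂u c₁u c₂u a₁v a₂v b₁v b₂v c₁v c₂v ha₁u ha₂u hC1 hC2
  refine ⟨⟨?_, ?_⟩, ?_⟩
  · rintro ⟨a₁w, a₂w, b₁w, b₂w, c₁w, c₂w, hc₁w, hc₂w, h⟩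
    obtain ⟨e0, e1, e2, e3, e5, e6, e9⟩ :=
      eqs_of_yb a₁u a₂u b₁u b₂u c₁u c₂u a₁v a₂v b₁v b₂v c₁v c₂v a₁w a₂w b₁w b₂w c₁w c₂w h
    have k1 : c₁w * ((a₁u * a₂u + b₁u * b₂u - c₁u * c₂u) * b₁v * a₂v -
        (a₁v * a₂v + b₁v * b₂v - c₁v * c₂v) * b₁u * a₁u) = 0 := by
      linear_combination a₂v*c₁u*e1 + a₁u*c₁v*e6 - a₂v*b₁u*e0 - a₁u*b₁v*e5
    have k2 : c₁w * ((a₁u * a₂u + b₁u * b₂u - c₁u * c₂u) * b₂v * a₁v -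
        (a₁v * a₂v + b₁v * b₂v - c₁v * c₂v) * b₂u * a₂u) = 0 := by
      linear_combination -(a₁v*c₁u*e9) - a₂u*c₁v*e2 + a₂u*b₂v*e0 + a₁v*b₂u*e5
    have k1' := (mul_eq_zero.mp k1).resolve_left hc₁w
    have k2' := (mul_eq_zero.mp k2).resolve_left hc₁w
    constructor
    · rw [div_eq_div_iff ha₁u ha₂v]; linear_combination k1'
    · rw [div_eq_div_iff ha₂u ha₁v]; linear_combination k2'
  · intro hC
    exact ⟨a₁u * a₁v - b₂u * b₁v, a₂u * a₂v - b₁u * b₂v,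
      ((c₁u * c₂u - b₁u * b₂u) / a₁u) * b₁v + b₁u * a₁v,
      ((c₁u * c₂u - b₁u * b₂u) / a₂u) * b₂v + b₂u * a₂v,
      c₁u * c₁v, c₂u * c₂v, mul_ne_zero hc₁u hc₁v, mul_ne_zero hc₂u hc₂v, hw0 hC⟩
  · intro hC
    refine ⟨hw0 hC, ?_⟩
    intro a₁w a₂w b₁w b₂w c₁w c₂w hc₁w hc₂w h
    obtain ⟨e0, e1, e2, e3, e5, e6, e9⟩ :=
      eqs_of_yb a₁u a₂u b₁u b₂u c₁u c₂u a₁v a₂v b₁v b₂v c₁v c₂v a₁w a₂w b₁w b₂w c₁w c₂w h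
    refine ⟨c₁w / (c₁u * c₁v), ?_⟩
    rw [smul_sixV]
    have g_a1 : a₁w = c₁w / (c₁u * c₁v) * (a₁u * a₁v - b₂u * b₁v) := by
      field_simp; linear_combination -e0
    have g_a2 : a₂w = c₁w / (c₁u * c₁v) * (a₂u * a₂v - b₁u * b₂v) := by
      field_simp; linear_combination e5
    have g_b1 : b₁w = c₁w / (c₁u * c₁v) * (((c₁u * c₂u - b₁u * b₂u) / a₁u) * b₁v + b₁u * a₁v) := by
      field_simp
      first | linear_combination c₁u*e1 - b₁u*e0 | linear_combination -(c₁u*e1) + b₁u*e0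
    have g_b2 : b₂w = c₁w / (c₁u * c₁v) * (((c₁u * c₂u - b₁u * b₂u) / a₂u) * b₂v + b₂u * a₂v) := by
      field_simp
      first | linear_combination -(c₁u*e9) + b₂u*e5 | linear_combination c₁u*e9 - b₂u*e5
    have g_c1 : c₁w = c₁w / (c₁u * c₁v) * (c₁u * c₁v) := by field_simp
    have g_c2 : c₂w = c₁w / (c₁u * c₁v) * (c₂u * c₂v) := by
      field_simp; linear_combination e3
    rw [← g_a1, ← g_a2, ← g_b1, ← g_b2, ← g_c1, ← g_c2]
end
end

section
/- If u, w, v are invertible six-vertex matrices with a₁, a₂ nonzero satisfying ⟦u, w, v⟧ = 0, then also ⟦u*, v, w⟧ = 0, ⟦w, u, v*⟧ = 0, ⟦v, u*, w*⟧ = 0, ⟦w*, v*, u⟧ = 0, and ⟦v*, w*, u*⟧ = 0. -/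
open scoped Matrix

noncomputable section

/-- The star involution on six-vertex matrices, in terms of weights. -/
noncomputable def starV (a₁ a₂ b₁ b₂ c₁ c₂ : ℂ) : Matrix (Fin 2 × Fin 2) (Fin 2 × Fin 2) ℂ :=
  sixV ((c₁ * c₂ - b₁ * b₂) / a₁) ((c₁ * c₂ - b₁ * b₂) / a₂) (-b₁) (-b₂) c₂ c₁


/-! ### Auxiliary lemmas -/

lemma t12_mul' (A B : Matrix (Fin 2 × Fin 2) (Fin 2 × Fin 2) ℂ) :
    t12 (A * B) = t12 A * t12 B := by
  ext p q
  simp only [t12, Matrix.of_apply, Matrix.mul_apply, Fintype.sum_prod_type,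
    ite_mul, mul_ite, one_mul, zero_mul, mul_one, mul_zero,
    Finset.sum_ite_eq, Finset.sum_ite_eq', Finset.mem_univ, if_true,
    Finset.mul_sum, Finset.sum_mul]
  split_ifs <;> simp

lemma t23_mul' (A B : Matrix (Fin 2 × Fin 2) (Fin 2 × Fin 2) ℂ) :
    t23 (A * B) = t23 A * t23 B := by
  ext p q
  simp only [t23, Matrix.of_apply, Matrix.mul_apply, Fintype.sum_prod_type,
    ite_mul, mul_ite, one_mul, zero_mul, mul_one, mul_zero,
    Finset.sum_ite_eq, Finset.sum_ite_eq', Finset.mem_univ, if_true,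
    Finset.mul_sum, Finset.sum_mul]
  by_cases h : p.1 = q.1 <;> simp [h, Finset.sum_ite_eq, Finset.sum_ite_eq']

lemma t12_smul' (c : ℂ) (A : Matrix (Fin 2 × Fin 2) (Fin 2 × Fin 2) ℂ) :
    t12 (c • A) = c • t12 A := by
  ext p q; simp [t12, mul_assoc]

lemma t23_smul' (c : ℂ) (A : Matrix (Fin 2 × Fin 2) (Fin 2 × Fin 2) ℂ) :
    t23 (c • A) = c • t23 A := by
  ext p q; simp [t23]

lemma t12_one' : t12 1 = 1 := by
  ext p q
  simp only [t12, Matrix.of_apply, Matrix.one_apply, Prod.ext_iff]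
  split_ifs <;> simp_all

lemma t23_one' : t23 1 = 1 := by
  ext p q
  simp only [t23, Matrix.of_apply, Matrix.one_apply, Prod.ext_iff]
  split_ifs <;> simp_all

lemma sixV_mul_starV (a₁ a₂ b₁ b₂ c₁ c₂ : ℂ) (ha₁ : a₁ ≠ 0) (ha₂ : a₂ ≠ 0) :
    sixV a₁ a₂ b₁ b₂ c₁ c₂ * starV a₁ a₂ b₁ b₂ c₁ c₂ = (c₁ * c₂ - b₁ * b₂) • 1 := by
  ext p q
  fin_cases p <;> fin_cases q <;>
    simp [sixV, starV, Matrix.mul_apply, Fintype.sum_prod_type, Fin.sum_univ_succ,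
      Matrix.one_apply, Prod.ext_iff] <;> (try field_simp) <;> (try ring)

lemma starV_mul_sixV (a₁ a₂ b₁ b₂ c₁ c₂ : ℂ) (ha₁ : a₁ ≠ 0) (ha₂ : a₂ ≠ 0) :
    starV a₁ a₂ b₁ b₂ c₁ c₂ * sixV a₁ a₂ b₁ b₂ c₁ c₂ = (c₁ * c₂ - b₁ * b₂) • 1 := by
  ext p q
  fin_cases p <;> fin_cases q <;>
    simp [sixV, starV, Matrix.mul_apply, Fintype.sum_prod_type, Fin.sum_univ_succ,
      Matrix.one_apply, Prod.ext_iff] <;> (try field_simp) <;> (try ring)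

/-- Abstract monoid lemma: shifting inverses around a Yang–Baxter relation. -/
lemma yb_shift {M : Type*} [Monoid M] {u w v u' w' v' iu iw iv iu' iw' iv' : M}
    (hu : u * iu = 1) (hu2 : iu * u = 1)
    (hw : w * iw = 1) (hw2 : iw * w = 1)
    (hv : v * iv = 1) (hv2 : iv * v = 1)
    (hU : u' * iu' = 1) (hU2 : iu' * u' = 1)
    (hW : w' * iw' = 1) (hW2 : iw' * w' = 1)
    (hV : v' * iv' = 1) (hV2 : iv' * v' = 1)
    (h : u * w' * v = v' * w * u') :
    (iu * v' * w = w' * v * iu') ∧ (w * u' * iv = iv' * u * w') ∧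
    (v * iu' * iw = iw' * iu * v') ∧ (iw * iv' * u = u' * iv * iw') ∧
    (iv * iw' * iu = iu' * iw * iv') := by
  have cu : ∀ x, iu * (u * x) = x := fun x => by rw [← mul_assoc, hu2, one_mul]
  have cu' : ∀ x, u * (iu * x) = x := fun x => by rw [← mul_assoc, hu, one_mul]
  have cw : ∀ x, iw * (w * x) = x := fun x => by rw [← mul_assoc, hw2, one_mul]
  have cw' : ∀ x, w * (iw * x) = x := fun x => by rw [← mul_assoc, hw, one_mul]
  have cv : ∀ x, iv * (v * x) = x := fun x => by rw [← mul_assoc, hv2, one_mul]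
  have cv' : ∀ x, v * (iv * x) = x := fun x => by rw [← mul_assoc, hv, one_mul]
  have cU : ∀ x, iu' * (u' * x) = x := fun x => by rw [← mul_assoc, hU2, one_mul]
  have cU' : ∀ x, u' * (iu' * x) = x := fun x => by rw [← mul_assoc, hU, one_mul]
  have cW : ∀ x, iw' * (w' * x) = x := fun x => by rw [← mul_assoc, hW2, one_mul]
  have cW' : ∀ x, w' * (iw' * x) = x := fun x => by rw [← mul_assoc, hW, one_mul]
  have cV : ∀ x, iv' * (v' * x) = x := fun x => by rw [← mul_assoc, hV2, one_mul]
  have cV' : ∀ x, v' * (iv' * x) = x := fun x => by rw [← mul_assoc, hV, one_mul]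
  refine ⟨?_, ?_, ?_, ?_, ?_⟩
  · have := congrArg (fun x => iu * x * iu') h
    simpa [mul_assoc, hu, hu2, hw, hw2, hv, hv2, hU, hU2, hW, hW2, hV, hV2,
      cu, cu', cw, cw', cv, cv', cU, cU', cW, cW', cV, cV'] using this.symm
  · have := congrArg (fun x => iv' * x * iv) h
    simpa [mul_assoc, hu, hu2, hw, hw2, hv, hv2, hU, hU2, hW, hW2, hV, hV2,
      cu, cu', cw, cw', cv, cv', cU, cU', cW, cW', cV, cV'] using this.symm
  · have := congrArg (fun x => iw' * iu * x * iu' * iw) h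
    simpa [mul_assoc, hu, hu2, hw, hw2, hv, hv2, hU, hU2, hW, hW2, hV, hV2,
      cu, cu', cw, cw', cv, cv', cU, cU', cW, cW', cV, cV'] using this
  · have := congrArg (fun x => iw * iv' * x * iv * iw') h
    simpa [mul_assoc, hu, hu2, hw, hw2, hv, hv2, hU, hU2, hW, hW2, hV, hV2,
      cu, cu', cw, cw', cv, cv', cU, cU', cW, cW', cV, cV'] using this
  · have e4 : iw * iv' * u = u' * iv * iw' := by
      have := congrArg (fun x => iw * iv' * x * iv * iw') h
      simpa [mul_assoc, hu, hu2, hw, hw2, hv, hv2, hU, hU2, hW, hW2, hV, hV2,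
        cu, cu', cw, cw', cv, cv', cU, cU', cW, cW', cV, cV'] using this
    have := congrArg (fun x => iu' * x * iu) e4
    simpa [mul_assoc, hu, hu2, hw, hw2, hv, hv2, hU, hU2, hW, hW2, hV, hV2,
      cu, cu', cw, cw', cv, cv', cU, cU', cW, cW', cV, cV'] using this.symm

lemma smul_cancel {c : ℂ} (hc : c ≠ 0)
    {A B : Matrix (Fin 2 × Fin 2 × Fin 2) (Fin 2 × Fin 2 × Fin 2) ℂ}
    (h : c • A = c • B) : A = B :=
  smul_right_injective _ hc h

lemma pair12_left (a₁ a₂ b₁ b₂ c₁ c₂ : ℂ) (ha₁ : a₁ ≠ 0) (ha₂ : a₂ ≠ 0)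
    (hB : c₁ * c₂ - b₁ * b₂ ≠ 0) :
    t12 (sixV a₁ a₂ b₁ b₂ c₁ c₂) * ((c₁ * c₂ - b₁ * b₂)⁻¹ • t12 (starV a₁ a₂ b₁ b₂ c₁ c₂)) = 1 := by
  rw [mul_smul_comm, ← t12_mul', sixV_mul_starV _ _ _ _ _ _ ha₁ ha₂, t12_smul', t12_one',
    smul_smul, inv_mul_cancel₀ hB, one_smul]

lemma pair12_right (a₁ a₂ b₁ b₂ c₁ c₂ : ℂ) (ha₁ : a₁ ≠ 0) (ha₂ : a₂ ≠ 0)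
    (hB : c₁ * c₂ - b₁ * b₂ ≠ 0) :
    ((c₁ * c₂ - b₁ * b₂)⁻¹ • t12 (starV a₁ a₂ b₁ b₂ c₁ c₂)) * t12 (sixV a₁ a₂ b₁ b₂ c₁ c₂) = 1 := by
  rw [smul_mul_assoc, ← t12_mul', starV_mul_sixV _ _ _ _ _ _ ha₁ ha₂, t12_smul', t12_one',
    smul_smul, inv_mul_cancel₀ hB, one_smul]

lemma pair23_left (a₁ a₂ b₁ b₂ c₁ c₂ : ℂ) (ha₁ : a₁ ≠ 0) (ha₂ : a₂ ≠ 0)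
    (hB : c₁ * c₂ - b₁ * b₂ ≠ 0) :
    t23 (sixV a₁ a₂ b₁ b₂ c₁ c₂) * ((c₁ * c₂ - b₁ * b₂)⁻¹ • t23 (starV a₁ a₂ b₁ b₂ c₁ c₂)) = 1 := by
  rw [mul_smul_comm, ← t23_mul', sixV_mul_starV _ _ _ _ _ _ ha₁ ha₂, t23_smul', t23_one',
    smul_smul, inv_mul_cancel₀ hB, one_smul]

lemma pair23_right (a₁ a₂ b₁ b₂ c₁ c₂ : ℂ) (ha₁ : a₁ ≠ 0) (ha₂ : a₂ ≠ 0)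
    (hB : c₁ * c₂ - b₁ * b₂ ≠ 0) :
    ((c₁ * c₂ - b₁ * b₂)⁻¹ • t23 (starV a₁ a₂ b₁ b₂ c₁ c₂)) * t23 (sixV a₁ a₂ b₁ b₂ c₁ c₂) = 1 := by
  rw [smul_mul_assoc, ← t23_mul', starV_mul_sixV _ _ _ _ _ _ ha₁ ha₂, t23_smul', t23_one',
    smul_smul, inv_mul_cancel₀ hB, one_smul]

theorem sixV_six_yang_baxter_identities
    (a₁u a₂u b₁u b₂u c₁u c₂u a₁w a₂w b₁w b₂w c₁w c₂w a₁v a₂v b₁v b₂v c₁v c₂v : ℂ)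
    (hc₁u : c₁u ≠ 0) (hc₂u : c₂u ≠ 0) (ha₁u : a₁u ≠ 0) (ha₂u : a₂u ≠ 0)
    (hBu : c₁u * c₂u - b₁u * b₂u ≠ 0)
    (hc₁w : c₁w ≠ 0) (hc₂w : c₂w ≠ 0) (ha₁w : a₁w ≠ 0) (ha₂w : a₂w ≠ 0)
    (hBw : c₁w * c₂w - b₁w * b₂w ≠ 0)
    (hc₁v : c₁v ≠ 0) (hc₂v : c₂v ≠ 0) (ha₁v : a₁v ≠ 0) (ha₂v : a₂v ≠ 0)
    (hBv : c₁v * c₂v - b₁v * b₂v ≠ 0)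
    (h : ybComm (sixV a₁u a₂u b₁u b₂u c₁u c₂u) (sixV a₁w a₂w b₁w b₂w c₁w c₂w)
      (sixV a₁v a₂v b₁v b₂v c₁v c₂v) = 0) :
    ybComm (starV a₁u a₂u b₁u b₂u c₁u c₂u) (sixV a₁v a₂v b₁v b₂v c₁v c₂v)
        (sixV a₁w a₂w b₁w b₂w c₁w c₂w) = 0 ∧
    ybComm (sixV a₁w a₂w b₁w b₂w c₁w c₂w) (sixV a₁u a₂u b₁u b₂u c₁u c₂u)
        (starV a₁v a₂v b₁v b₂v c₁v c₂v) = 0 ∧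
    ybComm (sixV a₁v a₂v b₁v b₂v c₁v c₂v) (starV a₁u a₂u b₁u b₂u c₁u c₂u)
        (starV a₁w a₂w b₁w b₂w c₁w c₂w) = 0 ∧
    ybComm (starV a₁w a₂w b₁w b₂w c₁w c₂w) (starV a₁v a₂v b₁v b₂v c₁v c₂v)
        (sixV a₁u a₂u b₁u b₂u c₁u c₂u) = 0 ∧
    ybComm (starV a₁v a₂v b₁v b₂v c₁v c₂v) (starV a₁w a₂w b₁w b₂w c₁w c₂w)
        (starV a₁u a₂u b₁u b₂u c₁u c₂u) = 0 := by
  unfold ybComm at h ⊢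
  rw [sub_eq_zero] at h
  obtain ⟨e1, e2, e3, e4, e5⟩ :=
    yb_shift
      (pair12_left a₁u a₂u b₁u b₂u c₁u c₂u ha₁u ha₂u hBu)
      (pair12_right a₁u a₂u b₁u b₂u c₁u c₂u ha₁u ha₂u hBu)
      (pair12_left a₁w a₂w b₁w b₂w c₁w c₂w ha₁w ha₂w hBw)
      (pair12_right a₁w a₂w b₁w b₂w c₁w c₂w ha₁w ha₂w hBw)
      (pair12_left a₁v a₂v b₁v b₂v c₁v c₂v ha₁v ha₂v hBv)
      (pair12_right a₁v a₂v b₁v b₂v c₁v c₂v ha₁v ha₂v hBv)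
      (pair23_left a₁u a₂u b₁u b₂u c₁u c₂u ha₁u ha₂u hBu)
      (pair23_right a₁u a₂u b₁u b₂u c₁u c₂u ha₁u ha₂u hBu)
      (pair23_left a₁w a₂w b₁w b₂w c₁w c₂w ha₁w ha₂w hBw)
      (pair23_right a₁w a₂w b₁w b₂w c₁w c₂w ha₁w ha₂w hBw)
      (pair23_left a₁v a₂v b₁v b₂v c₁v c₂v ha₁v ha₂v hBv)
      (pair23_right a₁v a₂v b₁v b₂v c₁v c₂v ha₁v ha₂v hBv)
      h
  have E1 : t12 (starV a₁u a₂u b₁u b₂u c₁u c₂u) * t23 (sixV a₁v a₂v b₁v b₂v c₁v c₂v) *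
      t12 (sixV a₁w a₂w b₁w b₂w c₁w c₂w) =
      t23 (sixV a₁w a₂w b₁w b₂w c₁w c₂w) * t12 (sixV a₁v a₂v b₁v b₂v c₁v c₂v) *
      t23 (starV a₁u a₂u b₁u b₂u c₁u c₂u) := by
    apply smul_cancel (inv_ne_zero hBu)
    simpa only [smul_mul_assoc, mul_smul_comm] using e1
  have E2 : t12 (sixV a₁w a₂w b₁w b₂w c₁w c₂w) * t23 (sixV a₁u a₂u b₁u b₂u c₁u c₂u) *
      t12 (starV a₁v a₂v b₁v b₂v c₁v c₂v) =
      t23 (starV a₁v a₂v b₁v b₂v c₁v c₂v) * t12 (sixV a₁u a₂u b₁u b₂u c₁u c₂u) *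
      t23 (sixV a₁w a₂w b₁w b₂w c₁w c₂w) := by
    apply smul_cancel (inv_ne_zero hBv)
    simpa only [smul_mul_assoc, mul_smul_comm] using e2
  have E3 : t12 (sixV a₁v a₂v b₁v b₂v c₁v c₂v) * t23 (starV a₁u a₂u b₁u b₂u c₁u c₂u) *
      t12 (starV a₁w a₂w b₁w b₂w c₁w c₂w) =
      t23 (starV a₁w a₂w b₁w b₂w c₁w c₂w) * t12 (starV a₁u a₂u b₁u b₂u c₁u c₂u) *
      t23 (sixV a₁v a₂v b₁v b₂v c₁v c₂v) := by
    apply smul_cancel (inv_ne_zero hBu)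
    apply smul_cancel (inv_ne_zero hBw)
    simp only [smul_mul_assoc, mul_smul_comm] at e3
    rw [smul_comm (c₁u * c₂u - b₁u * b₂u)⁻¹ (c₁w * c₂w - b₁w * b₂w)⁻¹] at e3
    exact e3
  have E4 : t12 (starV a₁w a₂w b₁w b₂w c₁w c₂w) * t23 (starV a₁v a₂v b₁v b₂v c₁v c₂v) *
      t12 (sixV a₁u a₂u b₁u b₂u c₁u c₂u) =
      t23 (sixV a₁u a₂u b₁u b₂u c₁u c₂u) * t12 (starV a₁v a₂v b₁v b₂v c₁v c₂v) *
      t23 (starV a₁w a₂w b₁w b₂w c₁w c₂w) := by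
    apply smul_cancel (inv_ne_zero hBw)
    apply smul_cancel (inv_ne_zero hBv)
    simp only [smul_mul_assoc, mul_smul_comm] at e4
    rw [smul_comm (c₁w * c₂w - b₁w * b₂w)⁻¹ (c₁v * c₂v - b₁v * b₂v)⁻¹] at e4
    exact e4
  have E5 : t12 (starV a₁v a₂v b₁v b₂v c₁v c₂v) * t23 (starV a₁w a₂w b₁w b₂w c₁w c₂w) *
      t12 (starV a₁u a₂u b₁u b₂u c₁u c₂u) =
      t23 (starV a₁u a₂u b₁u b₂u c₁u c₂u) * t12 (starV a₁w a₂w b₁w b₂w c₁w c₂w) *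
      t23 (starV a₁v a₂v b₁v b₂v c₁v c₂v) := by
    apply smul_cancel (inv_ne_zero hBv)
    apply smul_cancel (inv_ne_zero hBw)
    apply smul_cancel (inv_ne_zero hBu)
    simp only [smul_mul_assoc, mul_smul_comm] at e5
    rw [smul_comm (c₁v * c₂v - b₁v * b₂v)⁻¹ (c₁w * c₂w - b₁w * b₂w)⁻¹, smul_comm (c₁v * c₂v - b₁v * b₂v)⁻¹ (c₁u * c₂u - b₁u * b₂u)⁻¹, smul_comm (c₁w * c₂w - b₁w * b₂w)⁻¹ (c₁u * c₂u - b₁u * b₂u)⁻¹] at e5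
    exact e5
  exact ⟨sub_eq_zero.mpr E1, sub_eq_zero.mpr E2, sub_eq_zero.mpr E3,
    sub_eq_zero.mpr E4, sub_eq_zero.mpr E5⟩
end
end

section
/- (Korepin; Brubaker-Bump-Friedberg) If u and v are free-fermionic six-vertex matrices, then the six-vertex matrix w with weights a₁(w) = a₁(u)a₁(v) − b₂(u)b₁(v), a₂(w) = a₂(u)a₂(v) − b₁(u)b₂(v), b₁(w) = b₁(u)a₁(v) + a₂(u)b₁(v), b₂(w) = a₁(u)b₂(v) + b₂(u)a₂(v), c₁(w) = c₁(u)c₁(v), c₂(w) = c₂(u)c₂(v) is free-fermionic and satisfies ⟦u, w, v⟧ = 0. -/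
open scoped Matrix

noncomputable section

set_option maxHeartbeats 1000000 in
theorem free_fermionic_yang_baxter
    (a₁u a₂u b₁u b₂u c₁u c₂u a₁v a₂v b₁v b₂v c₁v c₂v : ℂ)
    (hc₁u : c₁u ≠ 0) (hc₂u : c₂u ≠ 0) (hc₁v : c₁v ≠ 0) (hc₂v : c₂v ≠ 0)
    (hu : a₁u * a₂u + b₁u * b₂u - c₁u * c₂u = 0)
    (hv : a₁v * a₂v + b₁v * b₂v - c₁v * c₂v = 0) :
    ((a₁u * a₁v - b₂u * b₁v) * (a₂u * a₂v - b₁u * b₂v) +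
        (b₁u * a₁v + a₂u * b₁v) * (a₁u * b₂v + b₂u * a₂v) -
        (c₁u * c₁v) * (c₂u * c₂v) = 0) ∧
      ybComm (sixV a₁u a₂u b₁u b₂u c₁u c₂u)
        (sixV (a₁u * a₁v - b₂u * b₁v) (a₂u * a₂v - b₁u * b₂v)
          (b₁u * a₁v + a₂u * b₁v) (a₁u * b₂v + b₂u * a₂v)
          (c₁u * c₁v) (c₂u * c₂v))
        (sixV a₁v a₂v b₁v b₂v c₁v c₂v) = 0 := by
  constructor
  · linear_combination (a₁v * a₂v + b₁v * b₂v) * hu + c₁u * c₂u * hv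
  · rw [← Matrix.ext_iff]
    simp only [Prod.forall, Fin.forall_fin_two, ybComm, Matrix.sub_apply, Matrix.mul_apply,
      t12, t23, sixV, Matrix.of_apply, Fintype.sum_prod_type, Fin.sum_univ_two,
      Prod.mk.injEq, Matrix.zero_apply]
    norm_num
    repeat' apply And.intro
    all_goals first
      | trivial
      | ring1
      | linear_combination (b₁v * c₁v) * hu
      | linear_combination (-b₁v * c₂v) * hu
      | linear_combination (-b₂v * c₁v) * hu
      | linear_combination (b₂v * c₂v) * hu
      | linear_combination (b₂u * c₁u) * hv
      | linear_combination (-b₁u * c₁u) * hv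
      | linear_combination (-b₂u * c₂u) * hv
      | linear_combination (b₁u * c₂u) * hv
end
end

section
/- The map R_ff from GL(2,ℂ) × ℂ× to free-fermionic six-vertex matrices, sending ((a₁, −b₂; b₁, a₂), c₁) to the six-vertex matrix with weights a₁, a₂, b₁, b₂, c₁ and c₂ = (a₁a₂ + b₁b₂)/c₁, satisfies ⟦R_ff(γ), R_ff(γδ), R_ff(δ)⟧ = 0 for all γ, δ in GL(2,ℂ) × ℂ×, where the group law on GL(2,ℂ) × ℂ× is componentwise multiplication. -/
open scoped Matrix

noncomputable section

/-- The free-fermionic R-matrix attached to `(g, c₁) ∈ GL(2,ℂ) × ℂˣ`,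
where `g = (a₁, −b₂; b₁, a₂)` and `c₂ = (a₁a₂ + b₁b₂)/c₁ = det g / c₁`. -/
noncomputable def RffGL (g : GL (Fin 2) ℂ) (c : ℂˣ) :
    Matrix (Fin 2 × Fin 2) (Fin 2 × Fin 2) ℂ :=
  sixV ((g : Matrix (Fin 2) (Fin 2) ℂ) 0 0) ((g : Matrix (Fin 2) (Fin 2) ℂ) 1 1)
    ((g : Matrix (Fin 2) (Fin 2) ℂ) 1 0) (-((g : Matrix (Fin 2) (Fin 2) ℂ) 0 1))
    (c : ℂ)
    (((g : Matrix (Fin 2) (Fin 2) ℂ) 0 0 * (g : Matrix (Fin 2) (Fin 2) ℂ) 1 1 +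
        (g : Matrix (Fin 2) (Fin 2) ℂ) 1 0 * (-((g : Matrix (Fin 2) (Fin 2) ℂ) 0 1))) /
      (c : ℂ))

set_option maxHeartbeats 2000000 in
lemma key (A B C D E F G H c c' : ℂ) (hc : c ≠ 0) (hc' : c' ≠ 0) :
    ybComm (sixV A D C (-B) c ((A*D + C*(-B))/c))
      (sixV (A*E+B*G) (C*F+D*H) (C*E+D*G) (-(A*F+B*H)) (c*c')
        (((A*E+B*G)*(C*F+D*H)+(C*E+D*G)*(-(A*F+B*H)))/(c*c')))
      (sixV E H G (-F) c' ((E*H+G*(-F))/c')) = 0 := by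
  ext ⟨p₁,p₂,p₃⟩ ⟨q₁,q₂,q₃⟩
  simp only [ybComm, t12, t23, Matrix.sub_apply, Matrix.mul_apply, Matrix.of_apply,
    Fintype.sum_prod_type, mul_ite, ite_mul, mul_one, one_mul, mul_zero, zero_mul,
    Finset.sum_ite_eq, Finset.sum_ite_eq', Finset.mem_univ, if_true, Matrix.zero_apply,
    Fin.sum_univ_two]
  fin_cases p₁ <;> fin_cases p₂ <;> fin_cases p₃ <;> fin_cases q₁ <;> fin_cases q₂ <;> fin_cases q₃ <;>
    (try simp only [sixV, Matrix.of_apply, Prod.mk.injEq, Fin.isValue]) <;>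
    (try norm_num) <;> (try field_simp) <;> (try ring)

theorem RffGL_parametrized_yang_baxter (g h : GL (Fin 2) ℂ) (c c' : ℂˣ) :
    ybComm (RffGL g c) (RffGL (g * h) (c * c')) (RffGL h c') = 0 := by
  have e : ((g * h : GL (Fin 2) ℂ) : Matrix (Fin 2) (Fin 2) ℂ) =
      (g : Matrix (Fin 2) (Fin 2) ℂ) * (h : Matrix (Fin 2) (Fin 2) ℂ) := rfl
  have e' : ((c * c' : ℂˣ) : ℂ) = (c : ℂ) * (c' : ℂ) := rfl
  simp only [RffGL, e, e', Matrix.mul_apply, Fin.sum_univ_two]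
  exact key _ _ _ _ _ _ _ _ _ _ c.ne_zero c'.ne_zero
end
end

section
/- Let u, v be six-vertex matrices with all entries a₁, a₂, b₁, b₂, c₁, c₂ nonzero and a₁a₂ + b₁b₂ − c₁c₂ ≠ 0 (i.e., in Ω), satisfying Δ(u) = Δ(v*). Let w be the normalized solution to ⟦u,w,v⟧ = 0 as given by a₁(w) = a₁(u)a₁(v) − b₂(u)b₁(v), a₂(w) = a₂(u)a₂(v) − b₁(u)b₂(v), b₁(w) = a₁(u*)b₁(v) + b₁(u)a₁(v), b₂(w) = a₂(u*)b₂(v) + b₂(u)a₂(v), c₁(w) = c₁(u)c₁(v), c₂(w) = c₂(u)c₂(v). Then a₁(v)b₁(v)N(w) = a₁(w)b₁(w)N(v), a₂(v)b₂(v)N(w) = a₂(w)b₂(w)N(v), a₁(w)b₂(w)N(u) = a₁(u)b₂(u)N(w), and a₂(w)b₁(w)N(u) = a₂(u)b₁(u)N(w). -/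
set_option maxHeartbeats 2000000


theorem N_identities_for_normalized_solution
    (a₁u a₂u b₁u b₂u c₁u c₂u a₁v a₂v b₁v b₂v c₁v c₂v : ℂ)
    (ha₁u : a₁u ≠ 0) (ha₂u : a₂u ≠ 0) (hb₁u : b₁u ≠ 0) (hb₂u : b₂u ≠ 0)
    (hc₁u : c₁u ≠ 0) (hc₂u : c₂u ≠ 0)
    (hNu : a₁u * a₂u + b₁u * b₂u - c₁u * c₂u ≠ 0)
    (ha₁v : a₁v ≠ 0) (ha₂v : a₂v ≠ 0) (hb₁v : b₁v ≠ 0) (hb₂v : b₂v ≠ 0)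
    (hc₁v : c₁v ≠ 0) (hc₂v : c₂v ≠ 0)
    (hNv : a₁v * a₂v + b₁v * b₂v - c₁v * c₂v ≠ 0)
    (hΔ₁ : (a₁u * a₂u + b₁u * b₂u - c₁u * c₂u) / (a₁u * b₁u) =
      (a₁v * a₂v + b₁v * b₂v - c₁v * c₂v) / (a₂v * b₁v))
    (hΔ₂ : (a₁u * a₂u + b₁u * b₂u - c₁u * c₂u) / (a₂u * b₂u) =
      (a₁v * a₂v + b₁v * b₂v - c₁v * c₂v) / (a₁v * b₂v))
    (a₁w a₂w b₁w b₂w c₁w c₂w : ℂ)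
    (ha₁w : a₁w = a₁u * a₁v - b₂u * b₁v)
    (ha₂w : a₂w = a₂u * a₂v - b₁u * b₂v)
    (hb₁w : b₁w = ((c₁u * c₂u - b₁u * b₂u) / a₁u) * b₁v + b₁u * a₁v)
    (hb₂w : b₂w = ((c₁u * c₂u - b₁u * b₂u) / a₂u) * b₂v + b₂u * a₂v)
    (hc₁w : c₁w = c₁u * c₁v) (hc₂w : c₂w = c₂u * c₂v) :
    a₁v * b₁v * (a₁w * a₂w + b₁w * b₂w - c₁w * c₂w) =
        a₁w * b₁w * (a₁v * a₂v + b₁v * b₂v - c₁v * c₂v) ∧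
    a₂v * b₂v * (a₁w * a₂w + b₁w * b₂w - c₁w * c₂w) =
        a₂w * b₂w * (a₁v * a₂v + b₁v * b₂v - c₁v * c₂v) ∧
    a₁w * b₂w * (a₁u * a₂u + b₁u * b₂u - c₁u * c₂u) =
        a₁u * b₂u * (a₁w * a₂w + b₁w * b₂w - c₁w * c₂w) ∧
    a₂w * b₁w * (a₁u * a₂u + b₁u * b₂u - c₁u * c₂u) =
        a₂u * b₁u * (a₁w * a₂w + b₁w * b₂w - c₁w * c₂w) := by
  have hNu' : a₁u * b₁u ≠ 0 := mul_ne_zero ha₁u hb₁u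
  have hNv1 : a₂v * b₁v ≠ 0 := mul_ne_zero ha₂v hb₁v
  have hNv2 : a₁v * b₂v ≠ 0 := mul_ne_zero ha₁v hb₂v
  have hNu2 : a₂u * b₂u ≠ 0 := mul_ne_zero ha₂u hb₂u
  have hE1 : (a₁u * a₂u + b₁u * b₂u - c₁u * c₂u) * (a₂v * b₁v)
      = (a₁v * a₂v + b₁v * b₂v - c₁v * c₂v) * (a₁u * b₁u) :=
    (div_eq_div_iff hNu' hNv1).mp hΔ₁
  have hE2 : (a₁u * a₂u + b₁u * b₂u - c₁u * c₂u) * (a₁v * b₂v)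
      = (a₁v * a₂v + b₁v * b₂v - c₁v * c₂v) * (a₂u * b₂u) :=
    (div_eq_div_iff hNu2 hNv2).mp hΔ₂
  have hB1 : a₁u * b₁w = (c₁u * c₂u - b₁u * b₂u) * b₁v + a₁u * b₁u * a₁v := by
    rw [hb₁w]; field_simp
  have hB2 : a₂u * b₂w = (c₁u * c₂u - b₁u * b₂u) * b₂v + a₂u * b₂u * a₂v := by
    rw [hb₂w]; field_simp
  subst ha₁w ha₂w hc₁w hc₂w
  have hAB : a₁u * a₂u ≠ 0 := mul_ne_zero ha₁u ha₂u
  refine ⟨mul_left_cancel₀ hAB ?_, mul_left_cancel₀ hAB ?_,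
    mul_left_cancel₀ hAB ?_, mul_left_cancel₀ hAB ?_⟩
  · linear_combination
      (a₂u * a₁v * (a₁u * a₁v - b₂u * b₁v)) * hE1
      - (b₁v * ((c₁u * c₂u - b₁u * b₂u) * b₁v + a₁u * b₁u * a₁v)) * hE2
      + (a₂u * (-((a₁u * a₁v - b₂u * b₁v) * (a₁v * a₂v + b₁v * b₂v - c₁v * c₂v))
          + a₁v * b₁v * b₂w)) * hB1
      + (a₁v * b₁v * ((c₁u * c₂u - b₁u * b₂u) * b₁v + a₁u * b₁u * a₁v)) * hB2
  · linear_combination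
      (-(b₂v * ((c₁u * c₂u - b₁u * b₂u) * b₂v + a₂u * b₂u * a₂v))) * hE1
      + (a₁u * a₂v * (a₂u * a₂v - b₁u * b₂v)) * hE2
      + (a₂u * a₂v * b₂v * b₂w) * hB1
      + (-((a₂u * a₂v - b₁u * b₂v) * (a₁v * a₂v + b₁v * b₂v - c₁v * c₂v)) * a₁u
          + a₂v * b₂v * ((c₁u * c₂u - b₁u * b₂u) * b₁v + a₁u * b₁u * a₁v)) * hB2
  · linear_combination
      (a₁u * a₁u * (c₁u * c₂u)) * hE2
      + (-(a₁u * b₂u * a₂u * b₂w)) * hB1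
      + ((a₁u * a₁v - b₂u * b₁v) * (a₁u * a₂u + b₁u * b₂u - c₁u * c₂u) * a₁u
          - a₁u * b₂u * ((c₁u * c₂u - b₁u * b₂u) * b₁v + a₁u * b₁u * a₁v)) * hB2
  · linear_combination
      (a₂u * a₂u * (c₁u * c₂u)) * hE1
      + (a₂u * ((a₂u * a₂v - b₁u * b₂v) * (a₁u * a₂u + b₁u * b₂u - c₁u * c₂u)
          - a₂u * b₁u * b₂w)) * hB1
      + (-(a₂u * b₁u * ((c₁u * c₂u - b₁u * b₂u) * b₁v + a₁u * b₁u * a₁v))) * hB2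
end

section
/- Let u, v be six-vertex matrices with all six weights nonzero and N(u), N(v) ≠ 0, satisfying Δ(u) = Δ(v*), and let w be the normalized Yang-Baxter solution. If N(w) = 0, then either a₁(w) = a₂(w) = 0 and b₁(w)b₂(w) = c₁(w)c₂(w) with b₁(w), b₂(w) ≠ 0, or b₁(w) = b₂(w) = 0 and a₁(w)a₂(w) = c₁(w)c₂(w) with a₁(w), a₂(w) ≠ 0. -/
theorem normalized_solution_with_vanishing_N
    (a₁u a₂u b₁u b₂u c₁u c₂u a₁v a₂v b₁v b₂v c₁v c₂v : ℂ)
    (ha₁u : a₁u ≠ 0) (ha₂u : a₂u ≠ 0) (hb₁u : b₁u ≠ 0) (hb₂u : b₂u ≠ 0)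
    (hc₁u : c₁u ≠ 0) (hc₂u : c₂u ≠ 0)
    (hNu : a₁u * a₂u + b₁u * b₂u - c₁u * c₂u ≠ 0)
    (ha₁v : a₁v ≠ 0) (ha₂v : a₂v ≠ 0) (hb₁v : b₁v ≠ 0) (hb₂v : b₂v ≠ 0)
    (hc₁v : c₁v ≠ 0) (hc₂v : c₂v ≠ 0)
    (hNv : a₁v * a₂v + b₁v * b₂v - c₁v * c₂v ≠ 0)
    (hΔ₁ : (a₁u * a₂u + b₁u * b₂u - c₁u * c₂u) / (a₁u * b₁u) =
      (a₁v * a₂v + b₁v * b₂v - c₁v * c₂v) / (a₂v * b₁v))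
    (hΔ₂ : (a₁u * a₂u + b₁u * b₂u - c₁u * c₂u) / (a₂u * b₂u) =
      (a₁v * a₂v + b₁v * b₂v - c₁v * c₂v) / (a₁v * b₂v))
    (a₁w a₂w b₁w b₂w c₁w c₂w : ℂ)
    (ha₁w : a₁w = a₁u * a₁v - b₂u * b₁v)
    (ha₂w : a₂w = a₂u * a₂v - b₁u * b₂v)
    (hb₁w : b₁w = ((c₁u * c₂u - b₁u * b₂u) / a₁u) * b₁v + b₁u * a₁v)
    (hb₂w : b₂w = ((c₁u * c₂u - b₁u * b₂u) / a₂u) * b₂v + b₂u * a₂v)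
    (hc₁w : c₁w = c₁u * c₁v) (hc₂w : c₂w = c₂u * c₂v)
    (hNw : a₁w * a₂w + b₁w * b₂w - c₁w * c₂w = 0) :
    (a₁w = 0 ∧ a₂w = 0 ∧ b₁w * b₂w = c₁w * c₂w ∧ b₁w ≠ 0 ∧ b₂w ≠ 0) ∨
    (b₁w = 0 ∧ b₂w = 0 ∧ a₁w * a₂w = c₁w * c₂w ∧ a₁w ≠ 0 ∧ a₂w ≠ 0) := by
  have hE1 : (a₁u * a₂u + b₁u * b₂u - c₁u * c₂u) * (a₂v * b₁v) =
      (a₁v * a₂v + b₁v * b₂v - c₁v * c₂v) * (a₁u * b₁u) :=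
    (div_eq_div_iff (mul_ne_zero ha₁u hb₁u) (mul_ne_zero ha₂v hb₁v)).mp hΔ₁
  have hE2 : (a₁u * a₂u + b₁u * b₂u - c₁u * c₂u) * (a₁v * b₂v) =
      (a₁v * a₂v + b₁v * b₂v - c₁v * c₂v) * (a₂u * b₂u) :=
    (div_eq_div_iff (mul_ne_zero ha₂u hb₂u) (mul_ne_zero ha₁v hb₂v)).mp hΔ₂
  have hB1 : a₁u * b₁w = (c₁u*c₂u - b₁u*b₂u)*b₁v + a₁u*b₁u*a₁v := by
    rw [hb₁w]; field_simp
  have hB2 : a₂u * b₂w = (c₁u*c₂u - b₁u*b₂u)*b₂v + a₂u*b₂u*a₂v := by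
    rw [hb₂w]; field_simp
  subst ha₁w ha₂w hc₁w hc₂w
  have K1 : ((a₁u*a₁v - b₂u*b₁v) * b₁w) * (a₁u * (a₂u * (a₁v*a₂v + b₁v*b₂v - c₁v*c₂v))) = 0 := by
    linear_combination ((-1)*b₂w*a₂u*a₁v*b₁v + (-1)*c₁v*c₂v*a₁u*a₂u*a₁v + c₁v*c₂v*a₂u*b₂u*b₁v + a₁u*a₂u*a₁v*a₁v*a₂v + a₁u*a₂u*a₁v*b₁v*b₂v + (-1)*a₂u*b₂u*a₁v*a₂v*b₁v + (-1)*a₂u*b₂u*b₁v*b₁v*b₂v) * hB1 + ((-1)*c₁u*c₂u*a₁v*b₁v*b₁v + (-1)*a₁u*b₁u*a₁v*a₁v*b₁v + b₁u*b₂u*a₁v*b₁v*b₁v) * hB2 + ((-1)*a₁u*a₂u*a₁v*a₁v + a₂u*b₂u*a₁v*b₁v) * hE1 + (c₁u*c₂u*b₁v*b₁v + a₁u*b₁u*a₁v*b₁v + (-1)*b₁u*b₂u*b₁v*b₁v) * hE2 + (a₁u*a₂u*a₁v*b₁v) * hNw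
  have K2 : ((a₂u*a₂v - b₁u*b₂v) * b₂w) * (a₁u * (a₂u * (a₁v*a₂v + b₁v*b₂v - c₁v*c₂v))) = 0 := by
    linear_combination ((-1)*b₂w*a₂u*a₂v*b₂v) * hB1 + ((-1)*c₁v*c₂v*a₁u*a₂u*a₂v + c₁v*c₂v*a₁u*b₁u*b₂v + (-1)*c₁u*c₂u*a₂v*b₁v*b₂v + a₁u*a₂u*a₁v*a₂v*a₂v + a₁u*a₂u*a₂v*b₁v*b₂v + (-2)*a₁u*b₁u*a₁v*a₂v*b₂v + (-1)*a₁u*b₁u*b₁v*b₂v*b₂v + b₁u*b₂u*a₂v*b₁v*b₂v) * hB2 + (c₁u*c₂u*b₂v*b₂v + a₂u*b₂u*a₂v*b₂v + (-1)*b₁u*b₂u*b₂v*b₂v) * hE1 + ((-1)*a₁u*a₂u*a₂v*a₂v + a₁u*b₁u*a₂v*b₂v) * hE2 + (a₁u*a₂u*a₂v*b₂v) * hNw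
  have K3 : ((a₁u*a₁v - b₂u*b₁v) * b₂w) * (a₁u * (a₂u * (a₁u*a₂u + b₁u*b₂u - c₁u*c₂u))) = 0 := by
    linear_combination ((-1)*b₂w*a₁u*a₂u*b₂u) * hB1 + ((-1)*c₁u*c₂u*a₁u*a₁u*a₁v + a₁u*a₁u*a₁u*a₂u*a₁v + (-1)*a₁u*a₁u*a₂u*b₂u*b₁v) * hB2 + (c₁u*c₂u*a₁u*a₁u) * hE2 + (a₁u*a₁u*a₂u*b₂u) * hNw
  have P1 : (a₁u*a₁v - b₂u*b₁v) * b₁w = 0 :=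
    (mul_eq_zero.mp K1).resolve_right (mul_ne_zero ha₁u (mul_ne_zero ha₂u hNv))
  have P2 : (a₂u*a₂v - b₁u*b₂v) * b₂w = 0 :=
    (mul_eq_zero.mp K2).resolve_right (mul_ne_zero ha₁u (mul_ne_zero ha₂u hNv))
  have P3 : (a₁u*a₁v - b₂u*b₁v) * b₂w = 0 :=
    (mul_eq_zero.mp K3).resolve_right (mul_ne_zero ha₁u (mul_ne_zero ha₂u hNu))
  have hcc : c₁u * c₁v * (c₂u * c₂v) ≠ 0 :=
    mul_ne_zero (mul_ne_zero hc₁u hc₁v) (mul_ne_zero hc₂u hc₂v)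
  by_cases hA1 : a₁u * a₁v - b₂u * b₁v = 0
  · left
    have bb : b₁w * b₂w = c₁u * c₁v * (c₂u * c₂v) := by
      linear_combination hNw - (a₂u*a₂v - b₁u*b₂v) * hA1
    have hb1ne : b₁w ≠ 0 := fun h => hcc (by rw [← bb, h, zero_mul])
    have hb2ne : b₂w ≠ 0 := fun h => hcc (by rw [← bb, h, mul_zero])
    have hA2 : a₂u * a₂v - b₁u * b₂v = 0 := (mul_eq_zero.mp P2).resolve_right hb2ne
    exact ⟨hA1, hA2, bb, hb1ne, hb2ne⟩
  · right
    have hb2 : b₂w = 0 := (mul_eq_zero.mp P3).resolve_left hA1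
    have hb1 : b₁w = 0 := (mul_eq_zero.mp P1).resolve_left hA1
    have aa : (a₁u*a₁v - b₂u*b₁v) * (a₂u*a₂v - b₁u*b₂v) = c₁u * c₁v * (c₂u * c₂v) := by
      linear_combination hNw - b₂w * hb1
    have hA2 : (a₂u*a₂v - b₁u*b₂v) ≠ 0 := fun h => hcc (by rw [← aa, h, mul_zero])
    exact ⟨hb1, hb2, aa, hA1, hA2⟩
end

section
/- (Five-vertex associativity in the interior) Let r, t, v be five-vertex matrices (six-vertex matrices with b₂ = 0) with a₁, a₂, b₁, c₁, c₂, N all nonzero, satisfying Δ₁(r) = Δ₁(t*) and Δ₁(t) = Δ₁(v*). Define the composition r ⋆ t by c₁(r⋆t) = c₁(r)c₁(t), c₂(r⋆t) = c₂(r)c₂(t), a₁(r⋆t) = a₁(r)a₁(t), a₂(r⋆t) = a₂(r)a₂(t), b₁(r⋆t) = b₁(r)a₁(t) + a₁(r*)b₁(t), where a₁(r*) = c₁(r)c₂(r)/a₁(r). Then (r ⋆ t) ⋆ v = r ⋆ (t ⋆ v), i.e., all five weight functions agree. -/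
/-- A five-vertex matrix, recorded by its five (possibly nonzero) weights. -/
structure FiveV where
  a₁ : ℂ
  a₂ : ℂ
  b₁ : ℂ
  c₁ : ℂ
  c₂ : ℂ

/-- `N(v) = a₁a₂ − c₁c₂` for a five-vertex matrix. -/
def FiveV.N (v : FiveV) : ℂ := v.a₁ * v.a₂ - v.c₁ * v.c₂

/-- The composition `u ⋆ v` of five-vertex matrices. -/
noncomputable def FiveV.comp (u v : FiveV) : FiveV :=
  ⟨u.a₁ * v.a₁, u.a₂ * v.a₂, u.b₁ * v.a₁ + (u.c₁ * u.c₂ / u.a₁) * v.b₁,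
    u.c₁ * v.c₁, u.c₂ * v.c₂⟩

theorem fiveV_assoc (r t v : FiveV)
    (hr : r.a₁ ≠ 0 ∧ r.a₂ ≠ 0 ∧ r.b₁ ≠ 0 ∧ r.c₁ ≠ 0 ∧ r.c₂ ≠ 0 ∧ r.N ≠ 0)
    (ht : t.a₁ ≠ 0 ∧ t.a₂ ≠ 0 ∧ t.b₁ ≠ 0 ∧ t.c₁ ≠ 0 ∧ t.c₂ ≠ 0 ∧ t.N ≠ 0)
    (hv : v.a₁ ≠ 0 ∧ v.a₂ ≠ 0 ∧ v.b₁ ≠ 0 ∧ v.c₁ ≠ 0 ∧ v.c₂ ≠ 0 ∧ v.N ≠ 0)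
    (hΔrt : r.N / (r.a₁ * r.b₁) = t.N / (t.a₂ * t.b₁))
    (hΔtv : t.N / (t.a₁ * t.b₁) = v.N / (v.a₂ * v.b₁)) :
    (r.comp t).comp v = r.comp (t.comp v) := by
  obtain ⟨ra1, -⟩ := hr
  obtain ⟨ta1, -⟩ := ht
  simp only [FiveV.comp, FiveV.mk.injEq]
  refine ⟨by ring, by ring, ?_, by ring, by ring⟩
  field_simp
  ring
end

section
/- In a groupoid with object map Δ satisfying: u ⋆ v is defined if and only if Δ(u) = Δ(v'), and when w = u ⋆ v one has Δ(w) = Δ(v) and Δ(w') = Δ(u'), suppose γ_{ij} ∈ G (for i in rows, j in columns) satisfy the row solvability condition: for each i, the element γ_{i,j} ⋆ γ'_{i+1,j} is defined and independent of j. Then the column solvability condition holds: for each j, the element γ'_{i,j} ⋆ γ_{i,j+1} is defined and independent of i. -/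
/-- A groupoid: a set `G` with a partially defined composition `mul` (with
definedness predicate `D`), and a total inverse map `inv`, satisfying the
associativity and inverse axioms. -/
structure YBGroupoid (G : Type*) where
  D : G → G → Prop
  mul : G → G → G
  inv : G → G
  assoc_defined_left : ∀ a b c, D a b → D b c → D (mul a b) c
  assoc_defined_right : ∀ a b c, D a b → D b c → D a (mul b c)
  assoc : ∀ a b c, D a b → D b c → mul (mul a b) c = mul a (mul b c)
  defined_inv : ∀ a, D a (inv a)
  inv_defined : ∀ a, D (inv a) a
  mul_inv_cancel : ∀ a b, D a b → mul (mul a b) (inv b) = a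
  inv_mul_cancel : ∀ a b, D a b → mul (inv a) (mul a b) = b

theorem YBGroupoid.inv_inv {G : Type*} (𝒢 : YBGroupoid G) (a : G) :
    𝒢.inv (𝒢.inv a) = a := by
  have h1 : 𝒢.mul (𝒢.mul a (𝒢.inv a)) (𝒢.inv (𝒢.inv a)) = a :=
    𝒢.mul_inv_cancel a (𝒢.inv a) (𝒢.defined_inv a)
  have h2 : 𝒢.mul (𝒢.mul a (𝒢.inv a)) (𝒢.inv (𝒢.inv a)) =
      𝒢.mul a (𝒢.mul (𝒢.inv a) (𝒢.inv (𝒢.inv a))) :=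
    𝒢.assoc a (𝒢.inv a) (𝒢.inv (𝒢.inv a)) (𝒢.defined_inv a) (𝒢.defined_inv (𝒢.inv a))
  have h3 : 𝒢.mul a (𝒢.mul (𝒢.inv a) (𝒢.inv (𝒢.inv a))) = a := h2 ▸ h1
  have hD : 𝒢.D a (𝒢.mul (𝒢.inv a) (𝒢.inv (𝒢.inv a))) :=
    𝒢.assoc_defined_right a (𝒢.inv a) (𝒢.inv (𝒢.inv a)) (𝒢.defined_inv a)
      (𝒢.defined_inv (𝒢.inv a))
  have h4 : 𝒢.mul (𝒢.inv a) (𝒢.mul a (𝒢.mul (𝒢.inv a) (𝒢.inv (𝒢.inv a)))) =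
      𝒢.mul (𝒢.inv a) (𝒢.inv (𝒢.inv a)) :=
    𝒢.inv_mul_cancel a _ hD
  rw [h3] at h4
  -- h4 : mul (inv a) a = mul (inv a) (inv (inv a))
  have h5 : 𝒢.mul (𝒢.inv (𝒢.inv a)) (𝒢.mul (𝒢.inv a) a) = a :=
    𝒢.inv_mul_cancel (𝒢.inv a) a (𝒢.inv_defined a)
  have h6 : 𝒢.mul (𝒢.inv (𝒢.inv a)) (𝒢.mul (𝒢.inv a) (𝒢.inv (𝒢.inv a))) =
      𝒢.inv (𝒢.inv a) :=
    𝒢.inv_mul_cancel (𝒢.inv a) (𝒢.inv (𝒢.inv a)) (𝒢.defined_inv (𝒢.inv a))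
  rw [← h4, h5] at h6
  exact h6.symm

/-- Swap lemma: if `a ⋆ b' = c ⋆ d'` (both defined) and `a' ⋆ c` is defined,
then `b' ⋆ d` is defined-computable and `a' ⋆ c = b' ⋆ d`. -/
theorem YBGroupoid.swap {G : Type*} (𝒢 : YBGroupoid G) (a b c d : G)
    (hab : 𝒢.D a (𝒢.inv b)) (hcd : 𝒢.D c (𝒢.inv d))
    (hac : 𝒢.D (𝒢.inv a) c)
    (heq : 𝒢.mul a (𝒢.inv b) = 𝒢.mul c (𝒢.inv d)) :
    𝒢.mul (𝒢.inv a) c = 𝒢.mul (𝒢.inv b) d := by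
  have h1 : 𝒢.mul (𝒢.inv a) (𝒢.mul a (𝒢.inv b)) = 𝒢.inv b :=
    𝒢.inv_mul_cancel a (𝒢.inv b) hab
  rw [heq] at h1
  have h2 : 𝒢.mul (𝒢.inv a) (𝒢.mul c (𝒢.inv d)) =
      𝒢.mul (𝒢.mul (𝒢.inv a) c) (𝒢.inv d) :=
    (𝒢.assoc (𝒢.inv a) c (𝒢.inv d) hac hcd).symm
  rw [h2] at h1
  -- h1 : mul (mul (inv a) c) (inv d) = inv b
  have hD : 𝒢.D (𝒢.mul (𝒢.inv a) c) (𝒢.inv d) :=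
    𝒢.assoc_defined_left (𝒢.inv a) c (𝒢.inv d) hac hcd
  have h3 : 𝒢.mul (𝒢.mul (𝒢.mul (𝒢.inv a) c) (𝒢.inv d)) (𝒢.inv (𝒢.inv d)) =
      𝒢.mul (𝒢.inv a) c :=
    𝒢.mul_inv_cancel (𝒢.mul (𝒢.inv a) c) (𝒢.inv d) hD
  rw [h1, 𝒢.inv_inv] at h3
  exact h3.symm

theorem groupoid_row_solvable_implies_column_solvable {G M : Type*}
    (𝒢 : YBGroupoid G) (Δ : G → M)
    (hdef : ∀ u v : G, 𝒢.D u v ↔ Δ u = Δ (𝒢.inv v))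
    (hobj : ∀ u v : G, 𝒢.D u v →
      Δ (𝒢.mul u v) = Δ v ∧ Δ (𝒢.inv (𝒢.mul u v)) = Δ (𝒢.inv u))
    (γ : ℕ → ℕ → G)
    (hrow : ∀ i j, 𝒢.D (γ i j) (𝒢.inv (γ (i + 1) j)) ∧
      𝒢.mul (γ i j) (𝒢.inv (γ (i + 1) j)) =
        𝒢.mul (γ i 0) (𝒢.inv (γ (i + 1) 0))) :
    ∀ i j, 𝒢.D (𝒢.inv (γ i j)) (γ i (j + 1)) ∧
      𝒢.mul (𝒢.inv (γ i j)) (γ i (j + 1)) =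
        𝒢.mul (𝒢.inv (γ 0 j)) (γ 0 (j + 1)) := by
  -- Δ (inv (γ i j)) is independent of j
  have hinvΔ : ∀ i j, Δ (𝒢.inv (γ i j)) = Δ (𝒢.inv (γ i 0)) := by
    intro i j
    have h1 := (hobj _ _ (hrow i j).1).2
    have h2 := (hobj _ _ (hrow i 0).1).2
    rw [← h1, (hrow i j).2, h2]
  -- definedness of columns
  have hDcol : ∀ i j, 𝒢.D (𝒢.inv (γ i j)) (γ i (j + 1)) := by
    intro i j
    rw [hdef]
    rw [hinvΔ i j, hinvΔ i (j + 1)]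
  intro i j
  refine ⟨hDcol i j, ?_⟩
  induction i with
  | zero => rfl
  | succ i ih =>
    rw [← ih]
    exact (𝒢.swap (γ i j) (γ (i + 1) j) (γ i (j + 1)) (γ (i + 1) (j + 1))
      (hrow i j).1 (hrow i (j + 1)).1 (hDcol i j)
      (((hrow i j).2).trans ((hrow i (j + 1)).2).symm)).symm
end
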